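/- Let P̂ ≻ 0 be symmetric positive definite, P symmetric with P - A₂ᵀA₂ ≻ 0, and assume P̂ - P is positive semidefinite. If μ ≠ 1 is an eigenvalue of the preconditioned matrix ℳ₂⁻¹𝒜 with eigenvector (x; y; z), then μ is an eigenvalue of P̂⁻¹(P - A₂ᵀA₂), x = (μ-1)⁻¹A₁y, z = (μ-1)⁻¹A₂y with y ≠ 0, and μ ∈ (0, 2). -/

import Mathlib

open Matrix

/-!
Multiplying the eigenvalue equation by `ℳ₂` turns it into the generalized eigenproblem
`𝒜 v = μ ℳ₂ v`, whose first and third block rows read `(μ - 1) x = A₁ y` and `(μ - 1) z = A₂ y`.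
Eliminating `z` from the middle row leaves `(P - A₂ᵀA₂) y = μ P̂ y`, so `y ≠ 0` and `μ` is the
Rayleigh quotient `yᵀ(P - A₂ᵀA₂)y / yᵀP̂y`. It is positive since `P - A₂ᵀA₂ ≻ 0`, and at most `1`
since `P̂ - (P - A₂ᵀA₂) = (P̂ - P) + A₂ᵀA₂ ⪰ 0`.
-/

theorem Matrix.nonsing_inv_mul_mulVec_eq_smul_iff {ι R : Type*} [Fintype ι] [DecidableEq ι]
    [CommRing R] {M A : Matrix ι ι R} (hM : IsUnit M.det) {v : ι → R} {μ : R} :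
    (M⁻¹ * A) *ᵥ v = μ • v ↔ A *ᵥ v = μ • (M *ᵥ v) := by
  constructor
  · intro h
    rw [← mul_nonsing_inv_cancel_left M A hM, ← mulVec_mulVec, h, mulVec_smul]
  · intro h
    rw [← mulVec_mulVec, h, mulVec_smul, mulVec_mulVec, nonsing_inv_mul M hM, one_mulVec]

theorem eq_inv_sub_one_smul_of_add_eq_smul {K V : Type*} [Field K] [AddCommGroup V] [Module K V]
    {μ : K} (hμ : μ ≠ 1) {x w : V} (h : x + w = μ • x) : x = (μ - 1)⁻¹ • w := by
  have hw : w = (μ - 1) • x := by rw [sub_smul, one_smul, ← h]; abel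
  rw [hw, smul_smul, inv_mul_cancel₀ (sub_ne_zero.mpr hμ), one_smul]

section GeneralizedEigenvalue

variable {ι : Type*} [Fintype ι] {S B : Matrix ι ι ℝ} {y : ι → ℝ} {μ : ℝ}

theorem pos_of_mulVec_eq_smul_mulVec (hS : S.PosDef) (hB : B.PosDef) (hy : y ≠ 0)
    (h : S *ᵥ y = μ • (B *ᵥ y)) : 0 < μ := by
  have hSy : 0 < μ * (y ⬝ᵥ B *ᵥ y) := by
    simpa [h, dotProduct_smul] using hS.dotProduct_mulVec_pos hy
  have hBy : 0 < y ⬝ᵥ B *ᵥ y := by simpa using hB.dotProduct_mulVec_pos hy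
  exact pos_of_mul_pos_left hSy hBy.le

theorem le_one_of_mulVec_eq_smul_mulVec (hB : B.PosDef) (hBS : (B - S).PosSemidef) (hy : y ≠ 0)
    (h : S *ᵥ y = μ • (B *ᵥ y)) : μ ≤ 1 := by
  have hBy : 0 < y ⬝ᵥ B *ᵥ y := by simpa using hB.dotProduct_mulVec_pos hy
  have hgap : 0 ≤ (1 - μ) * (y ⬝ᵥ B *ᵥ y) := by
    simpa [sub_mulVec, h, dotProduct_sub, dotProduct_smul, sub_mul] using
      hBS.dotProduct_mulVec_nonneg y
  nlinarith

end GeneralizedEigenvalue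

section BlockSystem

variable {m n o : Type*} [Fintype m] [Fintype n] [Fintype o] [DecidableEq m] [DecidableEq o]
  (A₁ : Matrix m n ℝ) (A₂ : Matrix o n ℝ) (P Phat : Matrix n n ℝ)
  {μ : ℝ} {x : m → ℝ} {y : n → ℝ} {z : o → ℝ}

theorem block_rows_of_mulVec_eq_smul_mulVec
    (h : fromBlocks 1 (fromCols A₁ 0) 0 (fromBlocks P A₂ᵀ A₂ 1) *ᵥ Sum.elim x (Sum.elim y z) =
      μ • (fromBlocks 1 0 0 (fromBlocks Phat A₂ᵀ 0 1) *ᵥ Sum.elim x (Sum.elim y z))) :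
    x + A₁ *ᵥ y = μ • x ∧ P *ᵥ y + A₂ᵀ *ᵥ z = μ • (Phat *ᵥ y + A₂ᵀ *ᵥ z) ∧
      A₂ *ᵥ y + z = μ • z := by
  simp only [fromBlocks_mulVec, one_mulVec, zero_mulVec, add_zero, zero_add] at h
  refine ⟨funext fun i => ?_, funext fun i => ?_, funext fun i => ?_⟩
  · simpa using congrFun h (Sum.inl i)
  · simpa using congrFun h (Sum.inr (Sum.inl i))
  · simpa using congrFun h (Sum.inr (Sum.inr i))

theorem schur_reduction_of_mulVec_eq_smul_mulVec (hμ : μ ≠ 1)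
    (h : fromBlocks 1 (fromCols A₁ 0) 0 (fromBlocks P A₂ᵀ A₂ 1) *ᵥ Sum.elim x (Sum.elim y z) =
      μ • (fromBlocks 1 0 0 (fromBlocks Phat A₂ᵀ 0 1) *ᵥ Sum.elim x (Sum.elim y z))) :
    x = (μ - 1)⁻¹ • (A₁ *ᵥ y) ∧ z = (μ - 1)⁻¹ • (A₂ *ᵥ y) ∧
      (P - A₂ᵀ * A₂) *ᵥ y = μ • (Phat *ᵥ y) := by
  obtain ⟨hx, hmid, hz⟩ := block_rows_of_mulVec_eq_smul_mulVec A₁ A₂ P Phat h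
  refine ⟨eq_inv_sub_one_smul_of_add_eq_smul hμ hx,
    eq_inv_sub_one_smul_of_add_eq_smul hμ (by rwa [add_comm]), ?_⟩
  have hA₂y : A₂ *ᵥ y = (μ - 1) • z := by linear_combination (norm := module) hz
  rw [sub_mulVec, ← mulVec_mulVec, hA₂y, mulVec_smul]
  linear_combination (norm := module) hmid

end BlockSystem

theorem stmt_15_general {p n q : ℕ} (A₁ : Matrix (Fin p) (Fin n) ℝ)
    (A₂ : Matrix (Fin q) (Fin n) ℝ) (Phat : Matrix (Fin n) (Fin n) ℝ)
    (hPhat : Phat.PosDef)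
    (hPA : (A₁ᵀ * A₁ - A₂ᵀ * A₂).PosDef)
    (hsemi : (Phat - A₁ᵀ * A₁).PosSemidef)
    (𝒜 ℳ₂ : Matrix (Fin p ⊕ (Fin n ⊕ Fin q)) (Fin p ⊕ (Fin n ⊕ Fin q)) ℝ)
    (h𝒜 : 𝒜 = fromBlocks 1 (fromCols A₁ 0) 0 (fromBlocks (A₁ᵀ * A₁) A₂ᵀ A₂ 1))
    (hℳ : ℳ₂ = fromBlocks 1 0 0 (fromBlocks Phat A₂ᵀ 0 1))
    (μ : ℝ) (hμ : μ ≠ 1) (x : Fin p → ℝ) (y : Fin n → ℝ) (z : Fin q → ℝ)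
    (hν : Sum.elim x (Sum.elim y z) ≠ 0)
    (heig : (ℳ₂⁻¹ * 𝒜) *ᵥ Sum.elim x (Sum.elim y z) = μ • Sum.elim x (Sum.elim y z)) :
    y ≠ 0 ∧ (Phat⁻¹ * (A₁ᵀ * A₁ - A₂ᵀ * A₂)) *ᵥ y = μ • y ∧
      x = (μ - 1)⁻¹ • (A₁ *ᵥ y) ∧ z = (μ - 1)⁻¹ • (A₂ *ᵥ y) ∧
      0 < μ ∧ μ < 2 := by
  have hPhat_det : IsUnit Phat.det := (isUnit_iff_isUnit_det _).mp hPhat.isUnit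
  have hℳ_det : IsUnit ℳ₂.det := by
    rwa [hℳ, det_fromBlocks_zero₂₁, det_fromBlocks_zero₂₁, det_one, det_one, one_mul, mul_one]
  rw [nonsing_inv_mul_mulVec_eq_smul_iff hℳ_det, h𝒜, hℳ] at heig
  obtain ⟨hx, hz, hy_eig⟩ := schur_reduction_of_mulVec_eq_smul_mulVec A₁ A₂ _ Phat hμ heig
  have hy : y ≠ 0 := by
    rintro rfl
    exact hν (by simp [hx, hz])
  have hgap : (Phat - (A₁ᵀ * A₁ - A₂ᵀ * A₂)).PosSemidef := by
    rw [sub_sub_eq_add_sub, add_sub_right_comm]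
    exact hsemi.add (posSemidef_conjTranspose_mul_self A₂)
  refine ⟨hy, (nonsing_inv_mul_mulVec_eq_smul_iff hPhat_det).mpr hy_eig, hx, hz,
    pos_of_mulVec_eq_smul_mulVec hPA hPhat hy hy_eig, ?_⟩
  linarith [le_one_of_mulVec_eq_smul_mulVec hPhat hgap hy hy_eig]

/-- If `μ ≠ 1` is an eigenvalue of `ℳ₂⁻¹𝒜` with eigenvector `(x; y; z)`, then `y ≠ 0`
is an eigenvector of `P̂⁻¹(P - A₂ᵀA₂)` for `μ`, `x = (μ-1)⁻¹A₁y`, `z = (μ-1)⁻¹A₂y`,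
and `μ ∈ (0, 2)`. -/
theorem stmt_15 {p n q : ℕ} (A₁ : Matrix (Fin p) (Fin n) ℝ)
    (A₂ : Matrix (Fin q) (Fin n) ℝ) (Phat : Matrix (Fin n) (Fin n) ℝ)
    (hA₁ : A₁.rank = n) (hPhat : Phat.PosDef)
    (hPA : (A₁ᵀ * A₁ - A₂ᵀ * A₂).PosDef)
    (hsemi : (Phat - A₁ᵀ * A₁).PosSemidef)
    (𝒜 ℳ₂ : Matrix (Fin p ⊕ (Fin n ⊕ Fin q)) (Fin p ⊕ (Fin n ⊕ Fin q)) ℝ)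
    (h𝒜 : 𝒜 = fromBlocks 1 (fromCols A₁ 0) 0 (fromBlocks (A₁ᵀ * A₁) A₂ᵀ A₂ 1))
    (hℳ : ℳ₂ = fromBlocks 1 0 0 (fromBlocks Phat A₂ᵀ 0 1))
    (μ : ℝ) (hμ : μ ≠ 1) (x : Fin p → ℝ) (y : Fin n → ℝ) (z : Fin q → ℝ)
    (hν : Sum.elim x (Sum.elim y z) ≠ 0)
    (heig : (ℳ₂⁻¹ * 𝒜) *ᵥ Sum.elim x (Sum.elim y z) = μ • Sum.elim x (Sum.elim y z)) :
    y ≠ 0 ∧ (Phat⁻¹ * (A₁ᵀ * A₁ - A₂ᵀ * A₂)) *ᵥ y = μ • y ∧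
      x = (μ - 1)⁻¹ • (A₁ *ᵥ y) ∧ z = (μ - 1)⁻¹ • (A₂ *ᵥ y) ∧
      0 < μ ∧ μ < 2 :=
  stmt_15_general A₁ A₂ Phat hPhat hPA hsemi 𝒜 ℳ₂ h𝒜 hℳ μ hμ x y z hν heig
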